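/- For every continuous function g : ℝ^d → ℝ, every compact set K ⊆ ℝ^d, and every ε > 0, there exist an integer m ≥ 1, vectors w_1, …, w_m ∈ ℝ^d, and scalars a_1, …, a_m, b_1, …, b_m ∈ ℝ such that the one-hidden-layer sigmoid network f(x) = Σ_{j=1}^m a_j σ(w_jᵀx + b_j) satisfies |f(x) − g(x)| ≤ ε for all x ∈ K. -/

import Mathlib

noncomputable def sigmoid (s : ℝ) : ℝ := 1 / (1 + Real.exp (-s))

/-!
Stone–Weierstrass, applied to the algebra spanned by the exponential ridge functions
`x ↦ exp (w ⬝ᵥ x)` (closed under products since `exp ((v + w) ⬝ᵥ x) = exp (v ⬝ᵥ x) * exp (w ⬝ᵥ x)`,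
and separating `x ≠ y` through `w = x - y`), approximates `g` on `K` by a finite sum
`∑ j, c j * exp (w j ⬝ᵥ x)`. Each exponential is in turn a single rescaled sigmoid neuron up to a
uniform error on `K`: `exp C * σ (t - C) = exp t / (1 + exp (t - C))` differs from `exp t` by at
most `exp (2 * t - C)`, which is small when `t` is bounded above and `C` is large.
-/

open Real hiding sigmoid
open Set Submodule

theorem exp_mul_sigmoid_sub_sub_exp (t C : ℝ) :
    exp C * sigmoid (t - C) - exp t = -(exp t / (1 + exp (C - t))) := by
  have hexp : exp C = exp (C - t) * exp t := by rw [← exp_add, sub_add_cancel]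
  rw [sigmoid, neg_sub, hexp]
  field_simp
  ring

theorem abs_exp_mul_sigmoid_sub_sub_exp_le (t C : ℝ) :
    |exp C * sigmoid (t - C) - exp t| ≤ exp (2 * t - C) := by
  rw [exp_mul_sigmoid_sub_sub_exp, abs_neg, abs_of_pos (by positivity)]
  calc exp t / (1 + exp (C - t)) ≤ exp t / exp (C - t) := by
        gcongr; linarith
    _ = exp (2 * t - C) := by rw [← exp_sub]; ring_nf

theorem exists_abs_exp_mul_sigmoid_sub_sub_exp_le (M : ℝ) {δ : ℝ} (hδ : 0 < δ) :
    ∃ C, ∀ t ≤ M, |exp C * sigmoid (t - C) - exp t| ≤ δ := by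
  refine ⟨2 * M - log δ, fun t ht => (abs_exp_mul_sigmoid_sub_sub_exp_le t _).trans ?_⟩
  calc exp (2 * t - (2 * M - log δ)) ≤ exp (log δ) := by gcongr; linarith
    _ = δ := exp_log hδ

variable {ι : Type*} [Fintype ι]

variable (ι) in
/-- Bundled as a monoid hom so that its range is visibly a submonoid, whence the algebra it
generates is just its linear span. -/
noncomputable def expDotProduct : Multiplicative (ι → ℝ) →* C(ι → ℝ, ℝ) where
  toFun w := ⟨fun x => exp (w.toAdd ⬝ᵥ x), by fun_prop⟩
  map_one' := by ext; simp
  map_mul' v w := by ext; simp [add_dotProduct, exp_add]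

@[simp]
theorem expDotProduct_apply (w : Multiplicative (ι → ℝ)) (x : ι → ℝ) :
    expDotProduct ι w x = exp (w.toAdd ⬝ᵥ x) := rfl

theorem separatesPoints_adjoin_range_expDotProduct :
    (Algebra.adjoin ℝ (range (expDotProduct ι))).SeparatesPoints := by
  intro x y hxy
  refine ⟨_, ⟨_, Algebra.subset_adjoin ⟨.ofAdd (x - y), rfl⟩, rfl⟩, ?_⟩
  simp only [expDotProduct_apply, toAdd_ofAdd, ne_eq, exp_eq_exp]
  rw [← sub_eq_zero, ← dotProduct_sub, dotProduct_self_eq_zero, sub_eq_zero]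
  exact hxy

theorem adjoin_range_expDotProduct_eq_span :
    Subalgebra.toSubmodule (Algebra.adjoin ℝ (range (expDotProduct ι))) =
      span ℝ (range (expDotProduct ι)) := by
  rw [Algebra.adjoin_eq_span, ← MonoidHom.coe_mrange, Submonoid.closure_eq]

theorem exists_sum_exp_dotProduct_near {K : Set (ι → ℝ)} (hK : IsCompact K)
    {g : (ι → ℝ) → ℝ} (hg : Continuous g) {ε : ℝ} (hε : 0 < ε) :
    ∃ (n : ℕ) (c : Fin n → ℝ) (w : Fin n → ι → ℝ),
      ∀ x ∈ K, |∑ j, c j * exp (w j ⬝ᵥ x) - g x| < ε := by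
  obtain ⟨f, hfA, hf⟩ :=
    ContinuousMap.exists_mem_subalgebra_near_continuous_of_isCompact_of_separatesPoints
      separatesPoints_adjoin_range_expDotProduct ⟨g, hg⟩ hK hε
  rw [← Subalgebra.mem_toSubmodule, adjoin_range_expDotProduct_eq_span, mem_span_set'] at hfA
  obtain ⟨n, c, e, rfl⟩ := hfA
  choose w hw using fun j => (e j).2
  refine ⟨n, c, fun j => (w j).toAdd, fun x hx => ?_⟩
  simpa [← hw] using hf x hx

theorem IsCompact.exists_forall_dotProduct_le {J : Type*} [Fintype J] {K : Set (ι → ℝ)}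
    (hK : IsCompact K) (w : J → ι → ℝ) : ∃ M, ∀ j, ∀ x ∈ K, w j ⬝ᵥ x ≤ M := by
  obtain ⟨M, hM⟩ := hK.exists_bound_of_continuousOn (f := fun x j => w j ⬝ᵥ x) (by fun_prop)
  exact ⟨M, fun j x hx => (le_abs_self _).trans ((norm_le_pi_norm _ j).trans (hM x hx))⟩

theorem exists_sum_sigmoid_near_sum_exp {J : Type*} [Fintype J] {K : Set (ι → ℝ)}
    (hK : IsCompact K) (c : J → ℝ) (w : J → ι → ℝ) {δ : ℝ} (hδ : 0 < δ) :
    ∃ C, ∀ x ∈ K,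
      |∑ j, c j * exp C * sigmoid (w j ⬝ᵥ x - C) - ∑ j, c j * exp (w j ⬝ᵥ x)| ≤ δ := by
  set S := ∑ j, |c j|
  obtain ⟨M, hM⟩ := hK.exists_forall_dotProduct_le w
  have hS : 0 < S + 1 := by positivity
  obtain ⟨C, hC⟩ := exists_abs_exp_mul_sigmoid_sub_sub_exp_le M (div_pos hδ hS)
  refine ⟨C, fun x hx => ?_⟩
  calc |∑ j, c j * exp C * sigmoid (w j ⬝ᵥ x - C) - ∑ j, c j * exp (w j ⬝ᵥ x)|
      = |∑ j, c j * (exp C * sigmoid (w j ⬝ᵥ x - C) - exp (w j ⬝ᵥ x))| := by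
        rw [← Finset.sum_sub_distrib]; simp only [mul_sub, mul_assoc]
    _ ≤ ∑ j, |c j| * (δ / (S + 1)) := by
        refine (Finset.abs_sum_le_sum_abs _ _).trans (Finset.sum_le_sum fun j _ => ?_)
        rw [abs_mul]
        exact mul_le_mul_of_nonneg_left (hC _ (hM j x hx)) (abs_nonneg _)
    _ = S / (S + 1) * δ := by rw [← Finset.sum_mul]; ring
    _ ≤ δ := mul_le_of_le_one_left hδ.le ((div_le_one hS).mpr (by linarith))

/-- Cybenko's universal approximation theorem for one-hidden-layer sigmoid networks. -/
theorem universal_approximation (d : ℕ) (g : (Fin d → ℝ) → ℝ) (hg : Continuous g)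
    (K : Set (Fin d → ℝ)) (hK : IsCompact K) (ε : ℝ) (hε : 0 < ε) :
    ∃ (m : ℕ), 1 ≤ m ∧ ∃ (w : Fin m → Fin d → ℝ) (a b : Fin m → ℝ),
      ∀ x ∈ K, |(∑ j, a j * sigmoid (∑ i, w j i * x i + b j)) - g x| ≤ ε := by
  obtain ⟨n, c, w, hexp⟩ := exists_sum_exp_dotProduct_near hK hg (half_pos hε)
  obtain ⟨C, hsig⟩ := exists_sum_sigmoid_near_sum_exp hK c w (half_pos hε)
  refine ⟨n + 1, le_add_self, Fin.cons 0 w, Fin.cons 0 fun j => c j * exp C,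
    Fin.cons 0 fun _ => -C, fun x hx => ?_⟩
  simp only [Fin.sum_univ_succ, Fin.cons_zero, Fin.cons_succ, zero_mul, zero_add]
  calc _ ≤ _ := abs_sub_le _ (∑ j, c j * exp (w j ⬝ᵥ x)) _
    _ ≤ ε / 2 + ε / 2 := add_le_add (hsig x hx) (hexp x hx).le
    _ = ε := add_halves ε
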